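/- arXiv:2505.16984 — 4 statements merged into one kernel-verified Lean document; each statement's English description precedes it below -/
import Mathlib

section
/- Let N ≥ 1 and 1 ≤ K ≤ N, let S* be a uniformly random K-element subset of an N-element set L, and let a deterministic adaptive algorithm query distinct elements s^(1), …, s^(T) ∈ L with T ≤ N, where each query s^(t) is a function of the previous queries and of the feedback bits 1[s^(1) ∈ S*], …, 1[s^(t−1) ∈ S*]. Then the probability that {s^(1), …, s^(T)} ∩ S* ≠ ∅ is at most Σ_{t=1}^T K/(N − t + 1). Moreover, if T ≤ N/2 then this probability is at most 2KT/N. -/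
open scoped BigOperators Classical

/-- `queryHist alg S t` is the list of feedback bits received by the deterministic
adaptive algorithm `alg` after its first `t` queries, when the hidden set of correct
leaves is `S`.  The `t+1`-st query of the algorithm is `alg (queryHist alg S t)`:
each query is a function of the previous feedback bits (and hence, since the
algorithm is deterministic, of the previous queries as well). -/
def queryHist {L : Type*} [DecidableEq L] (alg : List Bool → L) (S : Finset L) :
    ℕ → List Bool
  | 0 => []
  | t + 1 => queryHist alg S t ++ [decide (alg (queryHist alg S t) ∈ S)]

/-- If the first `t` queries in replicate form miss `S`, the history is all-false. -/
lemma hist_rep2 {L : Type*} [DecidableEq L] (alg : List Bool → L) (S : Finset L)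
    (t : ℕ) (h : ∀ i < t, alg (List.replicate i false) ∉ S) :
    ∀ i, i ≤ t → queryHist alg S i = List.replicate i false := by
  intro i
  induction i with
  | zero => intro _; rfl
  | succ i ih =>
    intro hi
    have hit : i < t := Nat.lt_of_succ_le hi
    have h1 := ih (le_of_lt hit)
    have h2 : alg (List.replicate i false) ∉ S := h i hit
    simp [queryHist, h1, h2, List.replicate_succ']

/-- If the first `t` actual queries all miss `S`, then histories are all-false and
the queries are what the algorithm does on all-false histories. -/
lemma hist_rep3 {L : Type*} [DecidableEq L] (alg : List Bool → L) (S : Finset L)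
    (t : ℕ) (h : ∀ i < t, alg (queryHist alg S i) ∉ S) :
    ∀ i, i ≤ t → queryHist alg S i = List.replicate i false ∧
      ∀ j < i, alg (List.replicate j false) ∉ S := by
  intro i
  induction i with
  | zero => intro _; exact ⟨rfl, by omega⟩
  | succ i ih =>
    intro hi
    have hit : i < t := Nat.lt_of_succ_le hi
    obtain ⟨h1, h2⟩ := ih (le_of_lt hit)
    have h3 : alg (List.replicate i false) ∉ S := by rw [← h1]; exact h i hit
    refine ⟨by simp [queryHist, h1, h3, List.replicate_succ'], ?_⟩
    intro j hj
    rcases Nat.lt_succ_iff_lt_or_eq.mp hj with hj' | rfl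
    · exact h2 j hj'
    · exact h3

theorem stmt1 {L : Type*} [Fintype L] [DecidableEq L]
    (N K T : ℕ) (hN : 1 ≤ N) (hK1 : 1 ≤ K) (hKN : K ≤ N)
    (hcard : Fintype.card L = N) (hT : T ≤ N)
    (alg : List Bool → L)
    (hdistinct : ∀ S : Finset L, S.card = K →
      ∀ i < T, ∀ j < T, i ≠ j →
        alg (queryHist alg S i) ≠ alg (queryHist alg S j)) :
    (((Finset.univ.filter (fun S : Finset L => S.card = K ∧
          ∃ t ∈ Finset.range T, alg (queryHist alg S t) ∈ S)).card : ℝ) /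
        (N.choose K : ℝ)
      ≤ ∑ t ∈ Finset.range T, (K : ℝ) / ((N : ℝ) - t)) ∧
    (2 * T ≤ N →
      ((Finset.univ.filter (fun S : Finset L => S.card = K ∧
          ∃ t ∈ Finset.range T, alg (queryHist alg S t) ∈ S)).card : ℝ) /
        (N.choose K : ℝ)
      ≤ 2 * K * T / N) := by
  classical
  have hC : (0:ℝ) < (N.choose K : ℝ) := by exact_mod_cast Nat.choose_pos hKN
  set q : ℕ → L := fun i => alg (List.replicate i false) with hq
  set A : ℕ → Finset (Finset L) := fun t =>
    Finset.univ.filter (fun S : Finset L =>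
      S.card = K ∧ (∀ i < t, q i ∉ S) ∧ q t ∈ S) with hA
  set F : Finset (Finset L) := Finset.univ.filter (fun S : Finset L => S.card = K ∧
      ∃ t ∈ Finset.range T, alg (queryHist alg S t) ∈ S) with hF
  -- F is covered by the first-hit events
  have hsub : F ⊆ (Finset.range T).biUnion A := by
    intro S hS
    simp only [hF, Finset.mem_filter, Finset.mem_univ, true_and, Finset.mem_range] at hS
    obtain ⟨hSK, t0, ht0, hhit⟩ := hS
    have hex : ∃ t, t < T ∧ alg (queryHist alg S t) ∈ S := ⟨t0, ht0, hhit⟩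
    set t := Nat.find hex with htdef
    obtain ⟨htT, hthit⟩ := Nat.find_spec hex
    have hnomiss : ∀ i < t, alg (queryHist alg S i) ∉ S := by
      intro i hi
      have := Nat.find_min hex hi
      have hiT : i < T := lt_trans hi htT
      tauto
    obtain ⟨hrept, hmiss⟩ := hist_rep3 alg S t hnomiss t le_rfl
    simp only [Finset.mem_biUnion, Finset.mem_range]
    refine ⟨t, htT, ?_⟩
    simp only [hA, Finset.mem_filter, Finset.mem_univ, true_and]
    refine ⟨hSK, hmiss, ?_⟩
    rw [hq]
    simpa [hrept, ← htdef] using hthit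
  -- counting each first-hit event
  have hAcard : ∀ t < T, (A t).card ≤ (N - (t+1)).choose (K-1) := by
    intro t htT
    by_cases hne : (A t).Nonempty
    · obtain ⟨S₀, hS₀⟩ := hne
      simp only [hA, Finset.mem_filter, Finset.mem_univ, true_and] at hS₀
      obtain ⟨hS₀K, hS₀miss, hS₀hit⟩ := hS₀
      have hrepi : ∀ i ≤ t, queryHist alg S₀ i = List.replicate i false :=
        hist_rep2 alg S₀ t hS₀miss
      have hqinj : Set.InjOn q (Finset.range (t+1)) := by
        intro i hi j hj hij
        simp only [Finset.coe_range, Set.mem_Iio, Finset.mem_coe, Finset.mem_range] at hi hj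
        by_contra hne'
        have hd := hdistinct S₀ hS₀K i (lt_of_le_of_lt (Nat.lt_succ_iff.mp hi) htT)
          j (lt_of_le_of_lt (Nat.lt_succ_iff.mp hj) htT) hne'
        rw [hrepi i (Nat.lt_succ_iff.mp hi), hrepi j (Nat.lt_succ_iff.mp hj)] at hd
        exact hd hij
      set Q : Finset L := (Finset.range (t+1)).image q with hQ
      have hQcard : Q.card = t + 1 := by
        rw [hQ, Finset.card_image_of_injOn hqinj, Finset.card_range]
      have htgt : ((Finset.univ \ Q).powersetCard (K-1)).card = (N - (t+1)).choose (K-1) := by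
        rw [Finset.card_powersetCard, Finset.card_sdiff_of_subset (Finset.subset_univ Q),
          Finset.card_univ, hcard, hQcard]
      rw [← htgt]
      apply Finset.card_le_card_of_injOn (fun S => S.erase (q t))
      · intro S hS
        simp only [Finset.coe_filter, Set.mem_setOf_eq, Finset.mem_coe, hA,
          Finset.mem_filter, Finset.mem_univ, true_and] at hS
        obtain ⟨hSK, hSmiss, hShit⟩ := hS
        rw [Finset.mem_coe, Finset.mem_powersetCard]
        constructor
        · intro x hx
          rw [Finset.mem_erase] at hx
          rw [Finset.mem_sdiff]
          refine ⟨Finset.mem_univ x, ?_⟩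
          intro hxQ
          rw [hQ, Finset.mem_image] at hxQ
          obtain ⟨i, hi, hix⟩ := hxQ
          rw [Finset.mem_range, Nat.lt_succ_iff] at hi
          rcases lt_or_eq_of_le hi with hi' | rfl
          · exact hSmiss i hi' (hix ▸ hx.2)
          · exact hx.1 hix.symm
        · rw [Finset.card_erase_of_mem hShit, hSK]
      · intro S1 hS1 S2 hS2 hee
        simp only [Finset.coe_filter, Set.mem_setOf_eq, Finset.mem_coe, hA,
          Finset.mem_filter, Finset.mem_univ, true_and] at hS1 hS2
        have h1 : S1 = insert (q t) (S1.erase (q t)) := (Finset.insert_erase hS1.2.2).symm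
        have h2 : S2 = insert (q t) (S2.erase (q t)) := (Finset.insert_erase hS2.2.2).symm
        rw [h1, h2]; exact congrArg (insert (q t)) hee
    · rw [Finset.not_nonempty_iff_eq_empty] at hne
      simp [hne]
  -- per-term real bound
  have hterm : ∀ t ∈ Finset.range T, ((A t).card : ℝ) ≤
      (K : ℝ) / ((N : ℝ) - t) * (N.choose K : ℝ) := by
    intro t ht
    have htT : t < T := Finset.mem_range.mp ht
    have htN : t < N := lt_of_lt_of_le htT hT
    have h1 : (N - t) * (N - (t+1)).choose (K-1) ≤ K * N.choose K := by
      have e1 : N - (t+1) = N - t - 1 := by omega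
      have e2 : N - t = (N - t - 1) + 1 := by omega
      have e3 : K = (K - 1) + 1 := by omega
      calc (N - t) * (N - (t+1)).choose (K-1)
          = ((N - t - 1) + 1) * (N - t - 1).choose (K-1) := by rw [e1, ← e2]
        _ = ((N - t - 1) + 1).choose ((K-1)+1) * ((K-1)+1) :=
            Nat.add_one_mul_choose_eq (N - t - 1) (K-1)
        _ = (N - t).choose K * K := by rw [← e2, ← e3]
        _ ≤ N.choose K * K := Nat.mul_le_mul_right _ (Nat.choose_le_choose K (Nat.sub_le N t))
        _ = K * N.choose K := mul_comm _ _
    have h2n : (A t).card * (N - t) ≤ K * N.choose K :=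
      le_trans (Nat.mul_le_mul_right _ (hAcard t htT)) (by rw [mul_comm]; exact h1)
    have hNt : (0:ℝ) < (N : ℝ) - t := by
      have : (t:ℝ) < N := by exact_mod_cast htN
      linarith
    rw [div_mul_eq_mul_div, le_div_iff₀ hNt]
    have hcast : ((N : ℝ) - t) = ((N - t : ℕ) : ℝ) := by
      rw [Nat.cast_sub htN.le]
    rw [hcast]
    exact_mod_cast h2n
  have hsum : ((F.card : ℝ)) ≤
      (∑ t ∈ Finset.range T, (K : ℝ) / ((N : ℝ) - t)) * (N.choose K : ℝ) := by
    calc (F.card : ℝ) ≤ (((Finset.range T).biUnion A).card : ℝ) := by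
          exact_mod_cast Finset.card_le_card hsub
      _ ≤ ∑ t ∈ Finset.range T, ((A t).card : ℝ) := by
          exact_mod_cast Finset.card_biUnion_le
      _ ≤ ∑ t ∈ Finset.range T, (K : ℝ) / ((N : ℝ) - t) * (N.choose K : ℝ) :=
          Finset.sum_le_sum hterm
      _ = (∑ t ∈ Finset.range T, (K : ℝ) / ((N : ℝ) - t)) * (N.choose K : ℝ) :=
          (Finset.sum_mul _ _ _).symm
  have hpart1 : ((F.card : ℝ)) / (N.choose K : ℝ) ≤
      ∑ t ∈ Finset.range T, (K : ℝ) / ((N : ℝ) - t) := by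
    rw [div_le_iff₀ hC]
    exact hsum
  refine ⟨hpart1, ?_⟩
  intro h2T
  have hNpos : (0:ℝ) < (N:ℝ) := by exact_mod_cast hN
  have hs2 : ∑ t ∈ Finset.range T, (K : ℝ) / ((N : ℝ) - t) ≤ 2 * K * T / N := by
    have hbound : ∀ t ∈ Finset.range T, (K : ℝ) / ((N : ℝ) - t) ≤ 2 * K / N := by
      intro t ht
      have htT : t < T := Finset.mem_range.mp ht
      have h1 : (N:ℝ) / 2 ≤ (N:ℝ) - t := by
        have : 2 * (t:ℝ) + 2 ≤ (N:ℝ) := by exact_mod_cast (show 2*t+2 ≤ N by omega)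
        linarith
      have h0 : (0:ℝ) < (N:ℝ)/2 := by linarith
      calc (K:ℝ) / ((N:ℝ) - t) ≤ (K:ℝ) / ((N:ℝ)/2) := by
            gcongr
        _ = 2 * K / N := by field_simp
    calc ∑ t ∈ Finset.range T, (K : ℝ) / ((N : ℝ) - t)
        ≤ ∑ _t ∈ Finset.range T, 2 * (K:ℝ) / N := Finset.sum_le_sum hbound
      _ = T * (2 * (K:ℝ) / N) := by rw [Finset.sum_const, Finset.card_range, nsmul_eq_mul]
      _ = 2 * K * T / N := by ring
  exact le_trans hpart1 hs2
end

section
/- Fix an integer B ≥ 2, an integer T ≥ 1, a learning rate η > 0, a penalty coefficient β ≥ 0, and an everywhere-positive reference distribution π_ref ∈ Δ^B. Set π^(0) = π_ref and, for each t = 1, …, T, let Ã^(t−1) ∈ ℝ^B satisfy ‖Ã^(t−1)‖_∞ ≤ 1 and let π^(t) be the minimizer over x ∈ Δ^B of ⟨−Ã^(t−1), x⟩ + β·KL(x‖π_ref) + (1/η)·KL(x‖π^(t−1)). Then for every π* ∈ Δ^B: Σ_{t=1}^T ⟨Ã^(t−1), π* − π^(t−1)⟩ ≤ (1/η + βT)·KL(π*‖π_ref)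 + 2ηT. -/
open scoped BigOperators

/-- Membership in the probability simplex Δ^B on `Fin B`. -/
def memSimplex (B : ℕ) (p : Fin B → ℝ) : Prop :=
  (∀ a, 0 ≤ p a) ∧ ∑ a, p a = 1

/-- KL divergence between two distributions on `Fin B`
(with the convention `0 * log 0 = 0`, automatic since `Real.log 0 = 0`). -/
noncomputable def KLd (B : ℕ) (p q : Fin B → ℝ) : ℝ :=
  ∑ a, p a * Real.log (p a / q a)

lemma exp_le_one_add_add_sq {x : ℝ} (h : |x| ≤ 1) : Real.exp x ≤ 1 + x + x ^ 2 := by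
  have h2 := Real.exp_bound h (n := 2) (by norm_num)
  have hsum : ∑ m ∈ Finset.range 2, x ^ m / m.factorial = 1 + x := by
    simp [Finset.sum_range_succ]
  rw [hsum] at h2
  have h3 : |x| ^ 2 = x ^ 2 := sq_abs x
  norm_num [Nat.factorial] at h2
  have h4 := (abs_sub_le_iff.1 h2).1
  nlinarith [sq_nonneg x, h3]

lemma gibbs_aux {B : ℕ} {p q : Fin B → ℝ} (hp : memSimplex B p)
    (hqpos : ∀ a, 0 < q a) :
    ∀ a, p a - q a ≤ p a * Real.log (p a / q a) := by
  intro a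
  rcases eq_or_lt_of_le (hp.1 a) with h0 | h0
  · rw [← h0]
    simpa using (hqpos a).le
  · have hq' := hqpos a
    have hlog : Real.log (q a / p a) ≤ q a / p a - 1 :=
      Real.log_le_sub_one_of_pos (div_pos (hqpos a) h0)
    have hrev : Real.log (p a / q a) = - Real.log (q a / p a) := by
      rw [← Real.log_inv]
      congr 1
      field_simp
    have e : p a * (q a / p a - 1) = q a - p a := by field_simp
    have h1 : p a * Real.log (q a / p a) ≤ q a - p a := by
      have := mul_le_mul_of_nonneg_left hlog h0.le
      linarith
    rw [hrev, mul_neg]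
    linarith

lemma gibbs_nonneg {B : ℕ} {p q : Fin B → ℝ} (hp : memSimplex B p) (hq : memSimplex B q)
    (hqpos : ∀ a, 0 < q a) : 0 ≤ KLd B p q := by
  have hsum : ∑ a, (p a - q a) ≤ ∑ a, p a * Real.log (p a / q a) :=
    Finset.sum_le_sum fun a _ => gibbs_aux hp hqpos a
  rw [Finset.sum_sub_distrib, hp.2, hq.2] at hsum
  simpa [KLd] using hsum

lemma gibbs_eq {B : ℕ} {p q : Fin B → ℝ} (hp : memSimplex B p) (hq : memSimplex B q)
    (hqpos : ∀ a, 0 < q a) (hKL : KLd B p q ≤ 0) : p = q := by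
  by_contra hne
  have hex : ∃ a, p a ≠ q a := by
    by_contra h
    push_neg at h
    exact hne (funext h)
  obtain ⟨a₀, ha₀⟩ := hex
  have strict : p a₀ - q a₀ < p a₀ * Real.log (p a₀ / q a₀) := by
    rcases eq_or_lt_of_le (hp.1 a₀) with h0 | h0
    · rw [← h0]
      have : 0 < q a₀ := hqpos a₀
      simpa using this
    · have hne1 : q a₀ / p a₀ ≠ 1 := by
        intro h
        apply ha₀
        field_simp at h
        linarith
      have hlog : Real.log (q a₀ / p a₀) < q a₀ / p a₀ - 1 :=
        Real.log_lt_sub_one_of_pos (div_pos (hqpos a₀) h0) hne1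
      have hrev : Real.log (p a₀ / q a₀) = - Real.log (q a₀ / p a₀) := by
        rw [← Real.log_inv]
        congr 1
        field_simp
      have e : p a₀ * (q a₀ / p a₀ - 1) = q a₀ - p a₀ := by field_simp
      have h1 : p a₀ * Real.log (q a₀ / p a₀) < q a₀ - p a₀ := by
        have := mul_lt_mul_of_pos_left hlog h0
        linarith
      rw [hrev, mul_neg]
      linarith
  have hsum : ∑ a, (p a - q a) < ∑ a, p a * Real.log (p a / q a) :=
    Finset.sum_lt_sum (fun a _ => gibbs_aux hp hqpos a) ⟨a₀, Finset.mem_univ a₀, strict⟩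
  rw [Finset.sum_sub_distrib, hp.2, hq.2] at hsum
  have : (0:ℝ) < KLd B p q := by simpa [KLd] using hsum
  linarith

lemma simplex_univ_nonempty {B : ℕ} {u : Fin B → ℝ} (hu : memSimplex B u) :
    (Finset.univ : Finset (Fin B)).Nonempty := by
  rcases (Finset.univ : Finset (Fin B)).eq_empty_or_nonempty with h | h
  · exfalso
    have := hu.2
    rw [h] at this
    simpa using this
  · exact h

/-- Donsker–Varadhan style one-step bound. -/
lemma dv_bound {B : ℕ} {η : ℝ} (hη : 0 < η) {u v A : Fin B → ℝ}
    (hu : memSimplex B u) (hupos : ∀ a, 0 < u a) (hv : memSimplex B v)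
    (hA : ∀ a, |A a| ≤ 1) :
    ∑ a, A a * (v a - u a) ≤ (1/η) * KLd B v u + 2 * η := by
  have hKL : 0 ≤ KLd B v u := gibbs_nonneg hv hu hupos
  rcases le_or_gt 1 η with hcase | hcase
  · have h1 : ∑ a, A a * (v a - u a) ≤ ∑ a, (v a + u a) := by
      apply Finset.sum_le_sum
      intro a _
      have hA' := abs_le.mp (hA a)
      have hva := hv.1 a
      have hua := (hupos a).le
      nlinarith [mul_nonneg (sub_nonneg.2 hA'.2) hva,
        mul_nonneg (by linarith [hA'.1] : (0:ℝ) ≤ 1 + A a) hua]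
    have h2 : ∑ a, (v a + u a) = 2 := by
      rw [Finset.sum_add_distrib, hv.2, hu.2]
      norm_num
    have h3 : (0:ℝ) ≤ (1/η) * KLd B v u := by positivity
    linarith
  · have hηA : ∀ a, |η * A a| ≤ 1 := by
      intro a
      rw [abs_mul, abs_of_pos hη]
      have := hA a
      nlinarith [abs_nonneg (A a)]
    set Z : ℝ := ∑ a, u a * Real.exp (η * A a) with hZdef
    have hZpos : 0 < Z :=
      Finset.sum_pos (fun a _ => mul_pos (hupos a) (Real.exp_pos _)) (simplex_univ_nonempty hu)
    set q : Fin B → ℝ := fun a => u a * Real.exp (η * A a) / Z with hqdef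
    have hqpos : ∀ a, 0 < q a := fun a =>
      div_pos (mul_pos (hupos a) (Real.exp_pos _)) hZpos
    have hq : memSimplex B q := by
      refine ⟨fun a => (hqpos a).le, ?_⟩
      simp only [hqdef]
      rw [← Finset.sum_div, ← hZdef, div_self hZpos.ne']
    have hexpand : KLd B v q
        = ∑ a, (v a * Real.log (v a / u a) - η * (A a * v a) + Real.log Z * v a) := by
      simp only [KLd]
      apply Finset.sum_congr rfl
      intro a _
      rcases eq_or_lt_of_le (hv.1 a) with h0 | h0
      · rw [← h0]; simp
      · have hlq : Real.log (q a) = Real.log (u a) + η * A a - Real.log Z := by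
          simp only [hqdef]
          rw [Real.log_div (mul_ne_zero (hupos a).ne' (Real.exp_ne_zero _)) hZpos.ne',
            Real.log_mul (hupos a).ne' (Real.exp_ne_zero _), Real.log_exp]
        rw [Real.log_div h0.ne' (hqpos a).ne', Real.log_div h0.ne' (hupos a).ne', hlq]
        ring
    have hsum_split : ∑ a, (v a * Real.log (v a / u a) - η * (A a * v a) + Real.log Z * v a)
        = KLd B v u - η * (∑ a, A a * v a) + Real.log Z := by
      simp only [KLd]
      rw [Finset.sum_add_distrib, Finset.sum_sub_distrib, ← Finset.mul_sum, ← Finset.mul_sum,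
        hv.2, mul_one]
    have hgq : 0 ≤ KLd B v q := gibbs_nonneg hv hq hqpos
    have hZle : Z ≤ 1 + η * (∑ a, A a * u a) + η ^ 2 := by
      have hterm : ∀ a, u a * Real.exp (η * A a) ≤ u a + η * (A a * u a) + η ^ 2 * u a := by
        intro a
        have hb := exp_le_one_add_add_sq (hηA a)
        have hu' := (hupos a).le
        have hA2 : (η * A a) ^ 2 ≤ η ^ 2 := by
          have hA' := abs_le.mp (hA a)
          have hA1 : (A a) ^ 2 ≤ 1 := by nlinarith [hA'.1, hA'.2]
          calc (η * A a) ^ 2 = η ^ 2 * (A a) ^ 2 := by ring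
            _ ≤ η ^ 2 * 1 := mul_le_mul_of_nonneg_left hA1 (sq_nonneg η)
            _ = η ^ 2 := mul_one _
        nlinarith [mul_le_mul_of_nonneg_left hb hu']
      calc Z ≤ ∑ a, (u a + η * (A a * u a) + η ^ 2 * u a) :=
            Finset.sum_le_sum fun a _ => hterm a
        _ = (∑ a, u a) + η * (∑ a, A a * u a) + η ^ 2 * (∑ a, u a) := by
            rw [Finset.sum_add_distrib, Finset.sum_add_distrib, ← Finset.mul_sum,
              ← Finset.mul_sum]
        _ = 1 + η * (∑ a, A a * u a) + η ^ 2 := by rw [hu.2]; ring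
    have hlogZ : Real.log Z ≤ η * (∑ a, A a * u a) + η ^ 2 := by
      have := Real.log_le_sub_one_of_pos hZpos
      linarith
    have hfinal : η * (∑ a, A a * v a) ≤ KLd B v u + η * (∑ a, A a * u a) + η ^ 2 := by
      have h0 : 0 ≤ KLd B v u - η * (∑ a, A a * v a) + Real.log Z := by
        rw [← hsum_split, ← hexpand]
        exact hgq
      linarith
    have hsplit : ∑ a, A a * (v a - u a) = (∑ a, A a * v a) - (∑ a, A a * u a) := by
      rw [← Finset.sum_sub_distrib]
      exact Finset.sum_congr rfl fun a _ => by ring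
    have e1 : η * (∑ a, A a * (v a - u a))
        = η * (∑ a, A a * v a) - η * (∑ a, A a * u a) := by
      rw [hsplit]; ring
    have hX : η * (∑ a, A a * (v a - u a)) ≤ η * ((1/η) * KLd B v u + 2 * η) := by
      have e2 : η * ((1/η) * KLd B v u + 2 * η) = KLd B v u + 2 * η ^ 2 := by
        field_simp
      rw [e2]
      nlinarith [sq_nonneg η]
    exact le_of_mul_le_mul_left hX hη

lemma main_step {B : ℕ} {η β : ℝ} (hη : 0 < η) (hβ : 0 ≤ β)
    {πref u v : Fin B → ℝ}
    (hr : memSimplex B πref) (hrpos : ∀ a, 0 < πref a)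
    (hu : memSimplex B u) (hupos : ∀ a, 0 < u a)
    {A : Fin B → ℝ} (hA : ∀ a, |A a| ≤ 1)
    (hv : memSimplex B v)
    (hmin : ∀ x : Fin B → ℝ, memSimplex B x →
      (∑ a, (-(A a)) * v a) + β * KLd B v πref + (1 / η) * KLd B v u
        ≤ (∑ a, (-(A a)) * x a) + β * KLd B x πref + (1 / η) * KLd B x u) :
    (∀ a, 0 < v a) ∧
      ∀ p : Fin B → ℝ, memSimplex B p →
        ∑ a, A a * (p a - u a)
          ≤ β * KLd B p πref + (1 / η) * (KLd B p u - KLd B p v) + 2 * η := by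
  have hβη : (0:ℝ) < β + 1 / η := by positivity
  set lam : ℝ := β + 1 / η with hlamdef
  have hlam0 : 0 < lam := hβη
  set m : Fin B → ℝ := fun a => A a + β * Real.log (πref a) + (1 / η) * Real.log (u a)
    with hmdef
  set Z : ℝ := ∑ a, Real.exp (m a / lam) with hZdef
  have hZpos : 0 < Z :=
    Finset.sum_pos (fun a _ => Real.exp_pos _) (simplex_univ_nonempty hu)
  set g : Fin B → ℝ := fun a => Real.exp (m a / lam) / Z with hgdef
  have hgpos : ∀ a, 0 < g a := by
    intro a
    simp only [hgdef]
    positivity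
  have hg : memSimplex B g := by
    refine ⟨fun a => (hgpos a).le, ?_⟩
    simp only [hgdef]
    rw [← Finset.sum_div, ← hZdef, div_self hZpos.ne']
  have identity : ∀ x : Fin B → ℝ, memSimplex B x →
      (∑ a, (-(A a)) * x a) + β * KLd B x πref + (1 / η) * KLd B x u
        = lam * KLd B x g - lam * Real.log Z := by
    intro x hx
    have key : ∀ a, (-(A a)) * x a + β * (x a * Real.log (x a / πref a))
        + (1 / η) * (x a * Real.log (x a / u a))
        = lam * (x a * Real.log (x a / g a)) - lam * Real.log Z * x a := by
      intro a
      rcases eq_or_lt_of_le (hx.1 a) with h0 | h0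
      · rw [← h0]; ring
      · have hlg : Real.log (g a) = m a / lam - Real.log Z := by
          simp only [hgdef]
          rw [Real.log_div (Real.exp_ne_zero _) hZpos.ne', Real.log_exp]
        rw [Real.log_div h0.ne' (hrpos a).ne', Real.log_div h0.ne' (hupos a).ne',
          Real.log_div h0.ne' (hgpos a).ne', hlg]
        simp only [hmdef, hlamdef]
        field_simp
        ring
    calc (∑ a, (-(A a)) * x a) + β * KLd B x πref + (1 / η) * KLd B x u
        = ∑ a, ((-(A a)) * x a + β * (x a * Real.log (x a / πref a))
            + (1 / η) * (x a * Real.log (x a / u a))) := by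
          simp only [KLd, Finset.mul_sum, Finset.sum_add_distrib]
      _ = ∑ a, (lam * (x a * Real.log (x a / g a)) - lam * Real.log Z * x a) :=
          Finset.sum_congr rfl fun a _ => key a
      _ = lam * KLd B x g - lam * Real.log Z := by
          simp only [KLd]
          rw [Finset.sum_sub_distrib, ← Finset.mul_sum, ← Finset.mul_sum, hx.2, mul_one]
  have hgg : KLd B g g = 0 :=
    Finset.sum_eq_zero fun a _ => by rw [div_self (hgpos a).ne', Real.log_one, mul_zero]
  have hvg : v = g := by
    have hFg := hmin g hg
    rw [identity v hv, identity g hg, hgg] at hFg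
    have hvg0 : KLd B v g ≤ 0 := by
      have h1 : lam * KLd B v g ≤ 0 := by linarith
      by_contra hpos
      push_neg at hpos
      nlinarith
    exact gibbs_eq hv hg hgpos hvg0
  have hvpos : ∀ a, 0 < v a := by rw [hvg]; exact hgpos
  refine ⟨hvpos, ?_⟩
  intro p hp
  have hvv : KLd B v v = 0 :=
    Finset.sum_eq_zero fun a _ => by rw [div_self (hvpos a).ne', Real.log_one, mul_zero]
  have hIp := identity p hp
  have hIv := identity v hv
  rw [← hvg] at hIp hIv
  rw [hvv] at hIv
  have h1 : 0 ≤ KLd B v πref := gibbs_nonneg hv hr hrpos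
  have h2 : 0 ≤ KLd B p v := gibbs_nonneg hp hv hvpos
  have h3 := dv_bound hη hu hupos hv hA
  have hsplit : ∑ a, A a * (p a - u a)
      = (∑ a, A a * (v a - u a)) + ((∑ a, (-(A a)) * v a) - (∑ a, (-(A a)) * p a)) := by
    rw [← Finset.sum_sub_distrib, ← Finset.sum_add_distrib]
    exact Finset.sum_congr rfl fun a _ => by ring
  have e1 : (1 / η) * (KLd B p u - KLd B p v)
      = (1 / η) * KLd B p u - (1 / η) * KLd B p v := by ring
  have e2 : lam * KLd B p v = β * KLd B p v + (1 / η) * KLd B p v := by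
    rw [hlamdef]; ring
  have h4 : 0 ≤ β * KLd B v πref := mul_nonneg hβ h1
  have h5 : 0 ≤ β * KLd B p v := mul_nonneg hβ h2
  linarith [hsplit, hIp, hIv, h3, e1, e2, h4, h5]

theorem stmt5 (B T : ℕ) (hB : 2 ≤ B) (hT : 1 ≤ T)
    (η β : ℝ) (hη : 0 < η) (hβ : 0 ≤ β)
    (πref : Fin B → ℝ) (hπref : memSimplex B πref) (hπrefpos : ∀ a, 0 < πref a)
    (π : ℕ → Fin B → ℝ) (A : ℕ → Fin B → ℝ)
    (hπ0 : π 0 = πref)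
    (hA : ∀ t < T, ∀ a, |A t a| ≤ 1)
    (hmin : ∀ t < T, memSimplex B (π (t + 1)) ∧
      ∀ x : Fin B → ℝ, memSimplex B x →
        (∑ a, (-(A t a)) * π (t + 1) a) + β * KLd B (π (t + 1)) πref
            + (1 / η) * KLd B (π (t + 1)) (π t)
          ≤ (∑ a, (-(A t a)) * x a) + β * KLd B x πref + (1 / η) * KLd B x (π t)) :
    ∀ πstar : Fin B → ℝ, memSimplex B πstar →
      ∑ t ∈ Finset.range T, ∑ a, A t a * (πstar a - π t a)
        ≤ (1 / η + β * T) * KLd B πstar πref + 2 * η * T := by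
  intro πstar hstar
  have hpos : ∀ t, t ≤ T → memSimplex B (π t) ∧ ∀ a, 0 < π t a := by
    intro t
    induction t with
    | zero => intro _; rw [hπ0]; exact ⟨hπref, hπrefpos⟩
    | succ n ih =>
      intro hn
      have hnT : n < T := hn
      obtain ⟨hums, hupos⟩ := ih (Nat.le_of_lt hnT)
      obtain ⟨hvs, hminn⟩ := hmin n hnT
      exact ⟨hvs, (main_step hη hβ hπref hπrefpos hums hupos (hA n hnT) hvs hminn).1⟩
  have hstep : ∀ t < T, ∑ a, A t a * (πstar a - π t a)
      ≤ β * KLd B πstar πref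
        + (1 / η) * (KLd B πstar (π t) - KLd B πstar (π (t + 1))) + 2 * η := by
    intro t ht
    obtain ⟨hums, hupos⟩ := hpos t (le_of_lt ht)
    obtain ⟨hvs, hminn⟩ := hmin t ht
    exact (main_step hη hβ hπref hπrefpos hums hupos (hA t ht) hvs hminn).2 πstar hstar
  have hsum := Finset.sum_le_sum fun t ht => hstep t (Finset.mem_range.mp ht)
  have htel : ∑ t ∈ Finset.range T, (KLd B πstar (π t) - KLd B πstar (π (t + 1)))
      = KLd B πstar (π 0) - KLd B πstar (π T) :=
    Finset.sum_range_sub' (fun t => KLd B πstar (π t)) T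
  have hRHS : ∑ t ∈ Finset.range T, (β * KLd B πstar πref
        + (1 / η) * (KLd B πstar (π t) - KLd B πstar (π (t + 1))) + 2 * η)
      = (T:ℝ) * (β * KLd B πstar πref)
        + (1 / η) * (KLd B πstar (π 0) - KLd B πstar (π T)) + (T:ℝ) * (2 * η) := by
    have hmid : ∑ t ∈ Finset.range T,
        (1 / η) * (KLd B πstar (π t) - KLd B πstar (π (t + 1)))
        = (1 / η) * (KLd B πstar (π 0) - KLd B πstar (π T)) := by
      rw [← Finset.mul_sum, htel]
    rw [Finset.sum_add_distrib, Finset.sum_add_distrib, hmid,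
      Finset.sum_const, Finset.sum_const, Finset.card_range, nsmul_eq_mul, nsmul_eq_mul]
  have hT0 : 0 ≤ KLd B πstar (π T) := by
    obtain ⟨hms, hps⟩ := hpos T le_rfl
    exact gibbs_nonneg hstar hms hps
  have hπ0' : KLd B πstar (π 0) = KLd B πstar πref := by rw [hπ0]
  have e1 : (1 / η) * (KLd B πstar (π 0) - KLd B πstar (π T))
      = (1 / η) * KLd B πstar πref - (1 / η) * KLd B πstar (π T) := by
    rw [hπ0']; ring
  have e2 : (1 / η + β * T) * KLd B πstar πref
      = (1 / η) * KLd B πstar πref + (T:ℝ) * (β * KLd B πstar πref) := by ring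
  have e3 : 0 ≤ (1 / η) * KLd B πstar (π T) := by positivity
  have e4 : (T:ℝ) * (2 * η) = 2 * η * T := by ring
  linarith [hsum, hRHS, e1, e2, e3, e4]
end

section
/- Fix an integer B ≥ 2, a vector g ∈ ℝ^B, constants η > 0 and β₀ ≥ 0, and everywhere-positive distributions x_ref, x₀ ∈ Δ^B. Let x₁ be the minimizer over x ∈ Δ^B of ⟨g, x⟩ + β₀·KL(x‖x_ref) + (1/η)·KL(x‖x₀). Then for every x₂ ∈ Δ^B: ηβ₀·KL(x₁‖x_ref) − ηβ₀·KL(x₂‖x_ref) + η·⟨g, x₁ − x₂⟩ ≤ KL(x₂‖x₀) − (1 + ηβ₀)·KL(x₂‖x₁) − KL(x₁‖x₀). -/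
open scoped BigOperators

lemma kl_le_zero_eq (B : ℕ) (p q : Fin B → ℝ) (hp : memSimplex B p) (hq : memSimplex B q)
    (hqpos : ∀ a, 0 < q a) (h : KLd B p q ≤ 0) : p = q := by
  have key : ∀ a : Fin B, a ∈ Finset.univ →
      0 ≤ p a * Real.log (p a / q a) - (p a - q a) := by
    intro a _
    rcases eq_or_lt_of_le (hp.1 a) with h0 | h0
    · simp [← h0]
      exact (hqpos a).le
    · have hlog : Real.log (q a / p a) ≤ q a / p a - 1 :=
        Real.log_le_sub_one_of_pos (div_pos (hqpos a) h0)
      have hneg : Real.log (p a / q a) = - Real.log (q a / p a) := by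
        rw [← Real.log_inv]
        congr 1
        field_simp
      have h2 : p a * Real.log (q a / p a) ≤ p a * (q a / p a - 1) :=
        mul_le_mul_of_nonneg_left hlog h0.le
      have h3 : p a * (q a / p a - 1) = q a - p a := by field_simp
      rw [hneg]
      nlinarith
  have hsum : ∑ a, (p a * Real.log (p a / q a) - (p a - q a)) = KLd B p q := by
    rw [Finset.sum_sub_distrib, Finset.sum_sub_distrib, hp.2, hq.2]
    simp [KLd]
  have hz : ∑ a, (p a * Real.log (p a / q a) - (p a - q a)) = 0 :=
    le_antisymm (by rw [hsum]; exact h) (Finset.sum_nonneg key)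
  have heach := (Finset.sum_eq_zero_iff_of_nonneg key).mp hz
  funext a
  by_contra hne
  have he := heach a (Finset.mem_univ a)
  rcases eq_or_lt_of_le (hp.1 a) with h0 | h0
  · rw [← h0] at he
    simp at he
    exact absurd he ((hqpos a).ne')
  · have hne1 : q a / p a ≠ 1 := by
      intro hc
      apply hne
      field_simp at hc
      linarith
    have hlog : Real.log (q a / p a) < q a / p a - 1 :=
      Real.log_lt_sub_one_of_pos (div_pos (hqpos a) h0) hne1
    have hneg : Real.log (p a / q a) = - Real.log (q a / p a) := by
      rw [← Real.log_inv]
      congr 1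
      field_simp
    have h2 : p a * Real.log (q a / p a) < p a * (q a / p a - 1) :=
      mul_lt_mul_of_pos_left hlog h0
    have h3 : p a * (q a / p a - 1) = q a - p a := by field_simp
    rw [hneg] at he
    nlinarith

theorem stmt7 (B : ℕ) (hB : 2 ≤ B) (g : Fin B → ℝ)
    (η β₀ : ℝ) (hη : 0 < η) (hβ₀ : 0 ≤ β₀)
    (xref x₀ : Fin B → ℝ)
    (href : memSimplex B xref) (hrefpos : ∀ a, 0 < xref a)
    (hx₀ : memSimplex B x₀) (hx₀pos : ∀ a, 0 < x₀ a)
    (x₁ : Fin B → ℝ) (hx₁ : memSimplex B x₁)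
    (hmin : ∀ x : Fin B → ℝ, memSimplex B x →
      (∑ a, g a * x₁ a) + β₀ * KLd B x₁ xref + (1 / η) * KLd B x₁ x₀
        ≤ (∑ a, g a * x a) + β₀ * KLd B x xref + (1 / η) * KLd B x x₀) :
    ∀ x₂ : Fin B → ℝ, memSimplex B x₂ →
      η * β₀ * KLd B x₁ xref - η * β₀ * KLd B x₂ xref
          + η * ∑ a, g a * (x₁ a - x₂ a)
        ≤ KLd B x₂ x₀ - (1 + η * β₀) * KLd B x₂ x₁ - KLd B x₁ x₀ := by
  have hBpos : 0 < B := by omega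
  haveI : NeZero B := ⟨by omega⟩
  set s : ℝ := η * β₀ with hs
  set t : ℝ := 1 + s with ht
  have hs0 : 0 ≤ s := mul_nonneg hη.le hβ₀
  have ht0 : 0 < t := by linarith
  set L : Fin B → ℝ := fun a => η * g a - s * Real.log (xref a) - Real.log (x₀ a) with hL
  set Z : ℝ := ∑ a, Real.exp (- L a / t) with hZ
  have hZpos : 0 < Z := Finset.sum_pos (fun a _ => Real.exp_pos _) Finset.univ_nonempty
  set y : Fin B → ℝ := fun a => Real.exp (- L a / t) / Z with hy
  have hypos : ∀ a, 0 < y a := fun a => div_pos (Real.exp_pos _) hZpos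
  have hysimp : memSimplex B y := by
    constructor
    · exact fun a => (hypos a).le
    · rw [hy, ← Finset.sum_div, ← hZ, div_self (ne_of_gt hZpos)]
  have hlogy : ∀ a, Real.log (y a) = - L a / t - Real.log Z := by
    intro a
    rw [hy]
    rw [Real.log_div (Real.exp_ne_zero _) (ne_of_gt hZpos), Real.log_exp]
  -- the key identity: φ(x) = t·KL(x‖y) − t·log Z for x in the simplex
  have hphi : ∀ x : Fin B → ℝ, memSimplex B x →
      η * (∑ a, g a * x a) + s * KLd B x xref + KLd B x x₀
        = t * KLd B x y - t * Real.log Z := by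
    intro x hx
    have hpt : ∀ a : Fin B,
        η * (g a * x a) + s * (x a * Real.log (x a / xref a))
          + x a * Real.log (x a / x₀ a)
        = t * (x a * Real.log (x a / y a)) - t * Real.log Z * x a := by
      intro a
      rcases eq_or_lt_of_le (hx.1 a) with h0 | h0
      · simp [← h0]
      · have e1 : Real.log (x a / xref a) = Real.log (x a) - Real.log (xref a) :=
          Real.log_div (ne_of_gt h0) (ne_of_gt (hrefpos a))
        have e2 : Real.log (x a / x₀ a) = Real.log (x a) - Real.log (x₀ a) :=
          Real.log_div (ne_of_gt h0) (ne_of_gt (hx₀pos a))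
        have e3 : Real.log (x a / y a) = Real.log (x a) - Real.log (y a) :=
          Real.log_div (ne_of_gt h0) (ne_of_gt (hypos a))
        rw [e1, e2, e3, hlogy a, hL]
        simp only
        field_simp
        ring
    calc η * (∑ a, g a * x a) + s * KLd B x xref + KLd B x x₀
        = ∑ a, (η * (g a * x a) + s * (x a * Real.log (x a / xref a))
            + x a * Real.log (x a / x₀ a)) := by
          simp [KLd, Finset.sum_add_distrib, Finset.mul_sum]
      _ = ∑ a, (t * (x a * Real.log (x a / y a)) - t * Real.log Z * x a) := by
          exact Finset.sum_congr rfl (fun a _ => hpt a)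
      _ = t * KLd B x y - t * Real.log Z := by
          rw [Finset.sum_sub_distrib, ← Finset.mul_sum, ← Finset.mul_sum, hx.2, mul_one]
          simp [KLd]
  have hKLyy : KLd B y y = 0 := by
    apply Finset.sum_eq_zero
    intro a _
    rw [div_self (hypos a).ne', Real.log_one, mul_zero]
  -- from minimality, x₁ = y
  have hmin' := hmin y hysimp
  have hmul := mul_le_mul_of_nonneg_left hmin' hη.le
  have hexp : ∀ A K K' : ℝ, η * (A + β₀ * K + 1 / η * K') = η * A + s * K + K' := by
    intro A K K'
    rw [hs]
    field_simp
  rw [hexp, hexp] at hmul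
  have hx1y : η * (∑ a, g a * x₁ a) + s * KLd B x₁ xref + KLd B x₁ x₀
      ≤ η * (∑ a, g a * y a) + s * KLd B y xref + KLd B y x₀ := hmul
  rw [hphi x₁ hx₁, hphi y hysimp, hKLyy] at hx1y
  have hKLx1y : KLd B x₁ y ≤ 0 := by nlinarith
  have hx1eq : x₁ = y := kl_le_zero_eq B x₁ y hx₁ hysimp hypos hKLx1y
  -- conclude
  intro x₂ hx₂
  have h2 := hphi x₂ hx₂
  have h1 := hphi x₁ hx₁
  rw [hx1eq, hKLyy] at h1
  rw [← hx1eq] at h1 h2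
  have hsplit : ∑ a, g a * (x₁ a - x₂ a) = (∑ a, g a * x₁ a) - ∑ a, g a * x₂ a := by
    rw [← Finset.sum_sub_distrib]
    exact Finset.sum_congr rfl (fun a _ => by ring)
  rw [hsplit, mul_sub]
  have hKL21 : KLd B x₂ x₁ = KLd B x₂ y := by rw [hx1eq]
  rw [hKL21] at h2 ⊢
  have ht00 : t * (0:ℝ) = 0 := mul_zero t
  linarith [h1, h2, hKL21]
end

section
/- Fix an integer B ≥ 2, a vector A ∈ ℝ^B, constants η > 0 and β ≥ 0, and everywhere-positive distributions x_ref, x₀ ∈ Δ^B. Then the minimizer over x ∈ Δ^B of ⟨−A, x⟩ + β·KL(x‖x_ref) + (1/η)·KL(x‖x₀) is the distribution x₁ given by x₁(a) = exp((η·A(a) + ηβ·log x_ref(a) + log x₀(a)) / (1 + ηβ)) / Z, where Z = Σ_{a′ ∈ Fin B} exp((η·A(a′) + ηβ·log x_ref(a′) + log x₀(a′)) / (1 + ηβ)). -/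
open scoped BigOperators

/-
The objective is `(β + 1/η)` times the free energy `∑ x log x - ⟨x, g⟩` of the scaled score
`g = (η A + η β log x_ref + log x₀) / (1 + η β)`, and the free energy of `x` exceeds that of the
Gibbs distribution `exp g / Z` by exactly `KL(x ‖ exp g / Z)`, which is nonnegative by
Gibbs' inequality.
-/

open Finset Real

namespace memSimplex

variable {B : ℕ} {p : Fin B → ℝ}

lemma pos_card (hp : memSimplex B p) : 0 < B := by
  rcases Nat.eq_zero_or_pos B with rfl | hB
  · simpa using hp.2
  · exact hB

end memSimplex

lemma sub_le_mul_log_div {p q : ℝ} (hp : 0 ≤ p) (hq : 0 < q) : p - q ≤ p * log (p / q) := by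
  rcases hp.eq_or_lt with rfl | hp
  · simpa using hq.le
  have hlog := one_sub_inv_le_log_of_pos (div_pos hp hq)
  rw [inv_div] at hlog
  calc p - q = p * (1 - q / p) := by field_simp
    _ ≤ p * log (p / q) := mul_le_mul_of_nonneg_left hlog hp.le

section KLd

variable {B : ℕ} {p q : Fin B → ℝ}

theorem KLd_nonneg (hp : memSimplex B p) (hq : ∀ a, 0 < q a) (hq_sum : ∑ a, q a = 1) :
    0 ≤ KLd B p q :=
  calc (0 : ℝ) = ∑ a, (p a - q a) := by rw [sum_sub_distrib, hp.2, hq_sum, sub_self]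
    _ ≤ KLd B p q := sum_le_sum fun a _ => sub_le_mul_log_div (hp.1 a) (hq a)

lemma KLd_eq_sub (hq : ∀ a, q a ≠ 0) :
    KLd B p q = ∑ a, p a * log (p a) - ∑ a, p a * log (q a) := by
  rw [KLd, ← sum_sub_distrib]
  refine sum_congr rfl fun a _ => ?_
  rcases eq_or_ne (p a) 0 with hpa | hpa
  · simp [hpa]
  · rw [log_div hpa (hq a), mul_sub]

lemma KLd_self : KLd B p p = 0 :=
  sum_eq_zero fun a _ => by
    rcases eq_or_ne (p a) 0 with hpa | hpa
    · simp [hpa]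
    · rw [div_self hpa, log_one, mul_zero]

end KLd

noncomputable def gibbs (B : ℕ) (g : Fin B → ℝ) : Fin B → ℝ :=
  fun a => exp (g a) / ∑ a', exp (g a')

namespace gibbs

variable {B : ℕ} (g : Fin B → ℝ)

lemma partition_pos (a : Fin B) : 0 < ∑ a', exp (g a') :=
  sum_pos (fun a' _ => exp_pos (g a')) ⟨a, mem_univ a⟩

lemma pos (a : Fin B) : 0 < gibbs B g a :=
  div_pos (exp_pos _) (partition_pos g a)

lemma sum_eq_one (hB : 0 < B) : ∑ a, gibbs B g a = 1 := by
  simp only [gibbs]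
  rw [← sum_div, div_self (partition_pos g ⟨0, hB⟩).ne']

lemma log_apply (a : Fin B) : log (gibbs B g a) = g a - log (∑ a', exp (g a')) := by
  rw [gibbs, log_div (exp_pos _).ne' (partition_pos g a).ne', log_exp]

lemma KLd_eq {x : Fin B → ℝ} (hx : ∑ a, x a = 1) :
    KLd B x (gibbs B g) =
      ∑ a, x a * log (x a) - ∑ a, x a * g a + log (∑ a', exp (g a')) := by
  rw [KLd_eq_sub fun a => (pos g a).ne']
  simp only [log_apply, mul_sub, sum_sub_distrib, ← sum_mul, hx, one_mul]
  ring

theorem freeEnergy_le {x : Fin B → ℝ} (hx : memSimplex B x) :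
    ∑ a, gibbs B g a * log (gibbs B g a) - ∑ a, gibbs B g a * g a
      ≤ ∑ a, x a * log (x a) - ∑ a, x a * g a := by
  have hself := KLd_eq g (sum_eq_one g hx.pos_card)
  have hx_KLd := KLd_eq g hx.2
  rw [KLd_self] at hself
  linarith [KLd_nonneg hx (pos g) (sum_eq_one g hx.pos_card)]

end gibbs

lemma memSimplex_gibbs {B : ℕ} (hB : 0 < B) (g : Fin B → ℝ) : memSimplex B (gibbs B g) :=
  ⟨fun a => (gibbs.pos g a).le, gibbs.sum_eq_one g hB⟩

lemma linear_add_KLd_eq_mul_freeEnergy {B : ℕ} (A : Fin B → ℝ) {η β : ℝ} (hη : η ≠ 0)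
    (hηβ : 1 + η * β ≠ 0) {xref x₀ : Fin B → ℝ} (hxref : ∀ a, xref a ≠ 0)
    (hx₀ : ∀ a, x₀ a ≠ 0) (x : Fin B → ℝ) :
    (∑ a, (-(A a)) * x a) + β * KLd B x xref + (1 / η) * KLd B x x₀
      = (β + 1 / η) * (∑ a, x a * log (x a) - ∑ a, x a *
          ((η * A a + η * β * log (xref a) + log (x₀ a)) / (1 + η * β))) := by
  rw [KLd_eq_sub hxref, KLd_eq_sub hx₀]
  have hscale : (β + 1 / η) * ∑ a, x a *
      ((η * A a + η * β * log (xref a) + log (x₀ a)) / (1 + η * β))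
        = ∑ a, A a * x a + β * ∑ a, x a * log (xref a) + 1 / η * ∑ a, x a * log (x₀ a) := by
    simp only [mul_sum, ← sum_add_distrib]
    refine sum_congr rfl fun a _ => ?_
    rw [show β + 1 / η = (1 + η * β) / η by field_simp; ring]
    field_simp
  rw [mul_sub (β + 1 / η), hscale]
  simp only [neg_mul, sum_neg_distrib]
  ring

theorem stmt8_general (B : ℕ) (hB : 2 ≤ B) (A : Fin B → ℝ)
    (η β : ℝ) (hη : 0 < η) (hβ : 0 ≤ β)
    (xref x₀ : Fin B → ℝ)
    (hrefpos : ∀ a, 0 < xref a)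
    (hx₀pos : ∀ a, 0 < x₀ a) :
    letI Z : ℝ := ∑ a' : Fin B,
      Real.exp ((η * A a' + η * β * Real.log (xref a') + Real.log (x₀ a')) / (1 + η * β))
    letI x₁ : Fin B → ℝ := fun a =>
      Real.exp ((η * A a + η * β * Real.log (xref a) + Real.log (x₀ a)) / (1 + η * β)) / Z
    memSimplex B x₁ ∧
      ∀ x : Fin B → ℝ, memSimplex B x →
        (∑ a, (-(A a)) * x₁ a) + β * KLd B x₁ xref + (1 / η) * KLd B x₁ x₀
          ≤ (∑ a, (-(A a)) * x a) + β * KLd B x xref + (1 / η) * KLd B x x₀ := by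
  set g : Fin B → ℝ := fun a =>
    (η * A a + η * β * log (xref a) + log (x₀ a)) / (1 + η * β)
  show memSimplex B (gibbs B g) ∧ ∀ x, memSimplex B x → _
  have objective := linear_add_KLd_eq_mul_freeEnergy A hη.ne' (by positivity : 1 + η * β ≠ 0)
    (fun a => (hrefpos a).ne') (fun a => (hx₀pos a).ne')
  refine ⟨memSimplex_gibbs (by omega) g, fun x hx => ?_⟩
  rw [objective, objective]
  exact mul_le_mul_of_nonneg_left (gibbs.freeEnergy_le g hx) (by positivity)

theorem stmt8 (B : ℕ) (hB : 2 ≤ B) (A : Fin B → ℝ)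
    (η β : ℝ) (hη : 0 < η) (hβ : 0 ≤ β)
    (xref x₀ : Fin B → ℝ)
    (href : memSimplex B xref) (hrefpos : ∀ a, 0 < xref a)
    (hx₀ : memSimplex B x₀) (hx₀pos : ∀ a, 0 < x₀ a) :
    letI Z : ℝ := ∑ a' : Fin B,
      Real.exp ((η * A a' + η * β * Real.log (xref a') + Real.log (x₀ a')) / (1 + η * β))
    letI x₁ : Fin B → ℝ := fun a =>
      Real.exp ((η * A a + η * β * Real.log (xref a) + Real.log (x₀ a)) / (1 + η * β)) / Z
    memSimplex B x₁ ∧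
      ∀ x : Fin B → ℝ, memSimplex B x →
        (∑ a, (-(A a)) * x₁ a) + β * KLd B x₁ xref + (1 / η) * KLd B x₁ x₀
          ≤ (∑ a, (-(A a)) * x a) + β * KLd B x xref + (1 / η) * KLd B x x₀ :=
  stmt8_general B hB A η β hη hβ xref x₀ hrefpos hx₀pos
end
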